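/- arXiv:math/9908111 — 3 statements merged into one kernel-verified Lean document; each statement's English description precedes it below -/
import Mathlib

section
/- Let (Ω₁,μ) and (Ω₂,ν) be σ-finite measure spaces, let 0 < p < r < q < ∞, and let T : L^q(μ) → L^p(ν) be any map. Suppose there exist measurable weights ω₁ : Ω₁ → [0,∞) with ‖ω₁‖_{L^{q/(q-r)}(μ)} ≤ 1 and ω₂ : Ω₂ → [0,∞) with ‖ω₂‖_{L^{p/(r-p)}(ν)} ≤ 1 such that ∫ |Tx|^r / ω₂ dν ≤ ∫ |x|^r ω₁ dμ for every x ∈ L^q(μ). Then for every n and all x₁,…,xₙ ∈ L^q(μ), ‖(∑_{k≤n} |Tx_k|^r)^{1/r}‖_{L^p(ν)} ≤ ‖(∑_{k≤n} |x_k|^r)^{1/r}‖_{L^q(μ)}. -/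
open MeasureTheory ENNReal
open scoped ENNReal

/-! With `F = ∑ₖ |T xₖ|^r` and `G = ∑ₖ |xₖ|^r`, the two sides are `‖F‖_{p/r}^{1/r}` and
`‖G‖_{q/r}^{1/r}`. Summing the weighted inequality over `k` gives `∫ F/w₂ ≤ ∫ G w₁`. Hölder with
exponents `q/r` and `q/(q-r)` bounds `∫ G w₁` by `‖G‖_{q/r}`, while Hölder for the exponent
`p/r < 1`, applied to `F = (F/w₂) w₂` with `r/p = 1 + (r-p)/p`, bounds `‖F‖_{p/r}` by `∫ F/w₂`. -/

section

variable {α : Type*} [MeasurableSpace α] {μ : Measure α}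

theorem eLpNorm'_ofReal_le_eLpNorm (w : α → ℝ) {s : ℝ} (hs : 0 < s) :
    eLpNorm' (fun x => ENNReal.ofReal (w x)) s μ ≤ eLpNorm w (ENNReal.ofReal s) μ := by
  rw [eLpNorm_eq_eLpNorm' (by simpa using hs) ofReal_ne_top, toReal_ofReal hs.le]
  refine eLpNorm'_mono_enorm_ae hs.le (ae_of_all _ fun x => ?_)
  rw [enorm_eq_self, Real.enorm_eq_ofReal_abs]
  exact ofReal_le_ofReal (le_abs_self _)

theorem eLpNorm_sum_rpow_rpow_one_div {ι : Type*} (s : Finset ι) (f : ι → α → ℝ) {p r : ℝ}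
    (hp : 0 < p) (hr : 0 < r) :
    eLpNorm (fun x => (∑ k ∈ s, |f k x| ^ r) ^ (1 / r)) (ENNReal.ofReal p) μ =
      eLpNorm' (fun x => ∑ k ∈ s, ENNReal.ofReal (|f k x| ^ r)) (p / r) μ ^ (1 / r) := by
  have hpow : (fun x => ∑ k ∈ s, ENNReal.ofReal (|f k x| ^ r)) =
      fun x => ‖(∑ k ∈ s, |f k x| ^ r) ^ (1 / r)‖ₑ ^ r := by
    ext x
    have hsum : 0 ≤ ∑ k ∈ s, |f k x| ^ r := Finset.sum_nonneg fun k _ => by positivity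
    rw [Real.enorm_of_nonneg (by positivity), ENNReal.ofReal_rpow_of_nonneg (by positivity) hr.le,
      ← Real.rpow_mul hsum, one_div_mul_cancel hr.ne', Real.rpow_one,
      ofReal_sum_of_nonneg fun k _ => by positivity]
  rw [hpow, eLpNorm'_enorm_rpow _ _ _ hr, div_mul_cancel₀ _ hr.ne',
    ← ENNReal.rpow_mul, mul_one_div_cancel hr.ne', ENNReal.rpow_one,
    eLpNorm_eq_eLpNorm' (by simpa using hp) ofReal_ne_top, toReal_ofReal hp.le]

theorem eLpNorm'_le_lintegral_div {f w : α → ℝ≥0∞} (hf : AEMeasurable f μ)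
    (hw : AEMeasurable w μ) (hw_top : ∀ᵐ x ∂μ, w x ≠ ∞) {a b : ℝ} (ha : 0 < a) (ha1 : a < 1)
    (hab : 1 / a = 1 + 1 / b) (hw_le : eLpNorm' w b μ ≤ 1) :
    eLpNorm' f a μ ≤ ∫⁻ x, f x / w x ∂μ := by
  by_cases h_top : ∫⁻ x, f x / w x ∂μ = ∞
  · simp [h_top]
  have hf_eq : f =ᵐ[μ] (fun x => f x / w x) * w := by
    filter_upwards [ae_lt_top' (hf.div hw) h_top, hw_top] with x hx hx_top
    rcases eq_or_ne (w x) 0 with h0 | h0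
    · have hfx : f x = 0 := by
        by_contra hfx
        rw [Pi.div_apply, h0, ENNReal.div_zero hfx] at hx
        exact lt_irrefl _ hx
      simp [hfx, h0]
    · exact (ENNReal.div_mul_cancel h0 hx_top).symm
  calc eLpNorm' f a μ = eLpNorm' ((fun x => f x / w x) * w) a μ := eLpNorm'_congr_ae hf_eq
    _ ≤ eLpNorm' (fun x => f x / w x) 1 μ * eLpNorm' w b μ :=
      ENNReal.lintegral_Lp_mul_le_Lq_mul_Lr ha ha1 (by simpa using hab) μ (hf.div hw) hw
    _ ≤ ∫⁻ x, f x / w x ∂μ := by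
      simpa [eLpNorm'] using mul_le_of_le_one_right zero_le hw_le

theorem lintegral_mul_le_eLpNorm' {g w : α → ℝ≥0∞} (hg : AEMeasurable g μ)
    (hw : AEMeasurable w μ) {a b : ℝ} (hab : a.HolderConjugate b) (hw_le : eLpNorm' w b μ ≤ 1) :
    ∫⁻ x, g x * w x ∂μ ≤ eLpNorm' g a μ :=
  (ENNReal.lintegral_mul_le_Lp_mul_Lq μ hab hg hw).trans
    (mul_le_of_le_one_right zero_le hw_le)

end

theorem lintegral_sum_div_le_lintegral_sum_mul {α β ι : Type*} [MeasurableSpace α]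
    [MeasurableSpace β] {μ : Measure α} {ν : Measure β} (s : Finset ι)
    {f : ι → β → ℝ≥0∞} {v : β → ℝ≥0∞} {g : ι → α → ℝ≥0∞} {w : α → ℝ≥0∞}
    (hf : ∀ i ∈ s, AEMeasurable (f i) ν) (hv : AEMeasurable v ν)
    (hg : ∀ i ∈ s, AEMeasurable (g i) μ) (hw : AEMeasurable w μ)
    (h : ∀ i ∈ s, ∫⁻ y, f i y / v y ∂ν ≤ ∫⁻ x, g i x * w x ∂μ) :
    ∫⁻ y, (∑ i ∈ s, f i y) / v y ∂ν ≤ ∫⁻ x, (∑ i ∈ s, g i x) * w x ∂μ := by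
  simp only [div_eq_mul_inv, Finset.sum_mul]
  rw [lintegral_finsetSum' (f := fun i y => f i y * (v y)⁻¹) s
      fun i hi => (hf i hi).mul hv.inv,
    lintegral_finsetSum' (f := fun i x => g i x * w x) s fun i hi => (hg i hi).mul hw]
  exact Finset.sum_le_sum fun i hi => by simpa only [div_eq_mul_inv] using h i hi

theorem weighted_implies_vector_valued_general
    {Ω₁ Ω₂ : Type*} [MeasurableSpace Ω₁] [MeasurableSpace Ω₂]
    (μ : Measure Ω₁) (ν : Measure Ω₂)
    (p r q : ℝ) (hp : 0 < p) (hpr : p < r) (hrq : r < q)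
    (T : Lp ℝ (ENNReal.ofReal q) μ → Lp ℝ (ENNReal.ofReal p) ν)
    (w₁ : Ω₁ → ℝ) (w₂ : Ω₂ → ℝ)
    (hw₁meas : Measurable w₁) (hw₂meas : Measurable w₂)
    (hw₁ : eLpNorm w₁ (ENNReal.ofReal (q / (q - r))) μ ≤ 1)
    (hw₂ : eLpNorm w₂ (ENNReal.ofReal (p / (r - p))) ν ≤ 1)
    (hweighted : ∀ x : Lp ℝ (ENNReal.ofReal q) μ,
      ∫⁻ ω, ENNReal.ofReal (|T x ω| ^ r) / ENNReal.ofReal (w₂ ω) ∂ν ≤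
        ∫⁻ ω, ENNReal.ofReal (|x ω| ^ r * w₁ ω) ∂μ) :
    ∀ (n : ℕ) (x : Fin n → Lp ℝ (ENNReal.ofReal q) μ),
      eLpNorm (fun ω => (∑ k, |T (x k) ω| ^ r) ^ (1 / r)) (ENNReal.ofReal p) ν ≤
        eLpNorm (fun ω => (∑ k, |x k ω| ^ r) ^ (1 / r)) (ENNReal.ofReal q) μ := by
  intro n x
  have hr : 0 < r := hp.trans hpr
  have hq : 0 < q := hr.trans hrq
  rw [eLpNorm_sum_rpow_rpow_one_div _ _ hp hr, eLpNorm_sum_rpow_rpow_one_div _ _ hq hr]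
  gcongr
  calc _ ≤ ∫⁻ ω, (∑ k, ENNReal.ofReal (|T (x k) ω| ^ r)) / ENNReal.ofReal (w₂ ω) ∂ν :=
        eLpNorm'_le_lintegral_div (by fun_prop) (by fun_prop) (ae_of_all _ fun _ => ofReal_ne_top)
          (by positivity) ((div_lt_one hr).2 hpr) (by field_simp; ring)
          ((eLpNorm'_ofReal_le_eLpNorm w₂ (by bound)).trans hw₂)
    _ ≤ ∫⁻ ω, (∑ k, ENNReal.ofReal (|x k ω| ^ r)) * ENNReal.ofReal (w₁ ω) ∂μ :=
        lintegral_sum_div_le_lintegral_sum_mul _ (fun _ _ => by fun_prop) (by fun_prop)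
          (fun _ _ => by fun_prop) (by fun_prop) fun k _ => by
            simpa only [ENNReal.ofReal_mul (Real.rpow_nonneg (abs_nonneg _) _)]
              using hweighted (x k)
    _ ≤ _ := lintegral_mul_le_eLpNorm' (by fun_prop) (by fun_prop)
        (Real.holderConjugate_iff.2 ⟨(one_lt_div hr).2 hrq, by field_simp; ring⟩)
        ((eLpNorm'_ofReal_le_eLpNorm w₁ (by bound)).trans hw₁)

/-- **Remark 2(1)** of the paper for `X = L^q(μ)`, `Y = L^p(ν)` (`0 < p < r < q`):
a weighted norm inequality with weights `w₁, w₂ ≥ 0`, `‖w₁‖_{L^{q/(q-r)}(μ)} ≤ 1`,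
`‖w₂‖_{L^{p/(r-p)}(ν)} ≤ 1`, implies the vector-valued norm inequality (with
constant `M_{(r)}(L^p) ⬝ M^{(r)}(L^q) = 1`). -/
theorem weighted_implies_vector_valued
    {Ω₁ Ω₂ : Type*} [MeasurableSpace Ω₁] [MeasurableSpace Ω₂]
    (μ : Measure Ω₁) (ν : Measure Ω₂) [SigmaFinite μ] [SigmaFinite ν]
    (p r q : ℝ) (hp : 0 < p) (hpr : p < r) (hrq : r < q)
    (T : Lp ℝ (ENNReal.ofReal q) μ → Lp ℝ (ENNReal.ofReal p) ν)
    (w₁ : Ω₁ → ℝ) (w₂ : Ω₂ → ℝ)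
    (hw₁meas : Measurable w₁) (hw₂meas : Measurable w₂)
    (hw₁pos : ∀ ω, 0 ≤ w₁ ω) (hw₂pos : ∀ ω, 0 ≤ w₂ ω)
    (hw₁ : eLpNorm w₁ (ENNReal.ofReal (q / (q - r))) μ ≤ 1)
    (hw₂ : eLpNorm w₂ (ENNReal.ofReal (p / (r - p))) ν ≤ 1)
    (hweighted : ∀ x : Lp ℝ (ENNReal.ofReal q) μ,
      ∫⁻ ω, ENNReal.ofReal (|T x ω| ^ r) / ENNReal.ofReal (w₂ ω) ∂ν ≤
        ∫⁻ ω, ENNReal.ofReal (|x ω| ^ r * w₁ ω) ∂μ) :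
    ∀ (n : ℕ) (x : Fin n → Lp ℝ (ENNReal.ofReal q) μ),
      eLpNorm (fun ω => (∑ k, |T (x k) ω| ^ r) ^ (1 / r)) (ENNReal.ofReal p) ν ≤
        eLpNorm (fun ω => (∑ k, |x k ω| ^ r) ^ (1 / r)) (ENNReal.ofReal q) μ :=
  weighted_implies_vector_valued_general μ ν p r q hp hpr hrq T w₁ w₂ hw₁meas hw₂meas hw₁ hw₂
    hweighted
end

section
/- Let (Ω₁,μ₁) and (Ω₂,μ₂) be σ-finite measure spaces, let 0 < p₁, p₂ < ∞, and set r = min(p₁,p₂). Then for every n and all measurable functions f₁,…,fₙ : Ω₁ × Ω₂ → ℝ (measurable with respect to the product σ-algebra), ‖(∑_{k≤n} |f_k|^r)^{1/r}‖_{(p₁,p₂)} ≤ (∑_{k≤n} ‖f_k‖_{(p₁,p₂)}^r)^{1/r}, where ‖f‖_{(p₁,p₂)} := (∫_{Ω₁} (∫_{Ω₂} |f(ω₁,ω₂)|^{p₂} dμ₂(ω₂))^{p₁/p₂} dμ₁(ω₁))^{1/p₁} ∈ [0,∞]. -/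
open MeasureTheory ENNReal
open scoped NNReal ENNReal

/-! With `g = |f|^r`, the `r`-th power of the mixed `(p₁, p₂)`-norm of `f` is the mixed
`(p₁/r, p₂/r)`-norm of `g`, and `r = min p₁ p₂` makes both exponents at least `1`. For such
exponents the mixed norm is an `L^{q₁}` norm of `L^{q₂}` norms, so Minkowski's inequality in `ω₂`
for each fixed `ω₁`, followed by Minkowski's inequality in `ω₁`, makes it subadditive. -/

/-- The mixed norm `‖f‖_{(p₁,p₂)} = (∫ (∫ |f(ω₁,ω₂)|^{p₂} dμ₂)^{p₁/p₂} dμ₁)^{1/p₁}`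
of a function on a product space, computed in the extended nonnegative reals. -/
noncomputable def mixedNorm {Ω₁ Ω₂ : Type*} [MeasurableSpace Ω₁] [MeasurableSpace Ω₂]
    (μ₁ : Measure Ω₁) (μ₂ : Measure Ω₂) (p₁ p₂ : ℝ) (f : Ω₁ × Ω₂ → ℝ) : ℝ≥0∞ :=
  (∫⁻ ω₁, (∫⁻ ω₂, ENNReal.ofReal (|f (ω₁, ω₂)| ^ p₂) ∂μ₂) ^ (p₁ / p₂) ∂μ₁) ^ (1 / p₁)

section MixedLpNorm

variable {Ω₁ Ω₂ ε : Type*} [MeasurableSpace Ω₁] [MeasurableSpace Ω₂]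
  [TopologicalSpace ε] [ESeminormedAddCommMonoid ε] {μ₁ : Measure Ω₁} {μ₂ : Measure Ω₂}

noncomputable def mixedLpNorm (μ₁ : Measure Ω₁) (μ₂ : Measure Ω₂) (q₁ q₂ : ℝ)
    (g : Ω₁ × Ω₂ → ε) : ℝ≥0∞ :=
  eLpNorm' (fun ω₁ ↦ eLpNorm' (fun ω₂ ↦ g (ω₁, ω₂)) q₂ μ₂) q₁ μ₁

theorem mixedNorm_eq_mixedLpNorm {p₁ p₂ : ℝ} (hp₂ : 0 ≤ p₂) (f : Ω₁ × Ω₂ → ℝ) :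
    mixedNorm μ₁ μ₂ p₁ p₂ f = mixedLpNorm μ₁ μ₂ p₁ p₂ f := by
  simp only [mixedNorm, mixedLpNorm, eLpNorm', enorm_eq_self, ← ENNReal.rpow_mul,
    one_div_mul_eq_div, Real.enorm_eq_ofReal_abs,
    ENNReal.ofReal_rpow_of_nonneg (abs_nonneg _) hp₂]

theorem mixedLpNorm_enorm_rpow {q₁ q₂ s : ℝ} (hs : 0 < s) (g : Ω₁ × Ω₂ → ε) :
    mixedLpNorm μ₁ μ₂ q₁ q₂ (‖g ·‖ₑ ^ s) = mixedLpNorm μ₁ μ₂ (q₁ * s) (q₂ * s) g ^ s := by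
  simp only [mixedLpNorm]
  rw [← eLpNorm'_enorm_rpow _ _ _ hs]
  simp only [enorm_eq_self, eLpNorm'_enorm_rpow _ _ _ hs]

theorem measurable_eLpNorm'_prodMk_left [SFinite μ₂] {g : Ω₁ × Ω₂ → ε}
    (hg : StronglyMeasurable g) (q : ℝ) :
    Measurable fun ω₁ ↦ eLpNorm' (fun ω₂ ↦ g (ω₁, ω₂)) q μ₂ :=
  (hg.enorm.pow_const q).lintegral_prod_right'.pow_const _

theorem mixedLpNorm_sum_le [SFinite μ₂] [ContinuousAdd ε] {q₁ q₂ : ℝ} (hq₁ : 1 ≤ q₁)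
    (hq₂ : 1 ≤ q₂) {ι : Type*} {s : Finset ι} {g : ι → Ω₁ × Ω₂ → ε}
    (hg : ∀ i ∈ s, StronglyMeasurable (g i)) :
    mixedLpNorm μ₁ μ₂ q₁ q₂ (∑ i ∈ s, g i) ≤ ∑ i ∈ s, mixedLpNorm μ₁ μ₂ q₁ q₂ (g i) := by
  have hinner (ω₁ : Ω₁) : eLpNorm' (fun ω₂ ↦ ∑ i ∈ s, g i (ω₁, ω₂)) q₂ μ₂ ≤
      ∑ i ∈ s, eLpNorm' (fun ω₂ ↦ g i (ω₁, ω₂)) q₂ μ₂ := by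
    simpa only [Finset.sum_fn] using eLpNorm'_sum_le (f := fun i ω₂ ↦ g i (ω₁, ω₂)) (μ := μ₂)
      (fun i hi ↦ ((hg i hi).comp_measurable measurable_prodMk_left).aestronglyMeasurable) hq₂
  calc mixedLpNorm μ₁ μ₂ q₁ q₂ (∑ i ∈ s, g i)
      ≤ eLpNorm' (∑ i ∈ s, fun ω₁ ↦ eLpNorm' (fun ω₂ ↦ g i (ω₁, ω₂)) q₂ μ₂) q₁ μ₁ :=
        eLpNorm'_mono_enorm_ae (by linarith) (Filter.Eventually.of_forall fun ω₁ ↦ by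
          simpa only [enorm_eq_self, Finset.sum_apply] using hinner ω₁)
    _ ≤ ∑ i ∈ s, mixedLpNorm μ₁ μ₂ q₁ q₂ (g i) := eLpNorm'_sum_le
        (fun i hi ↦ (measurable_eLpNorm'_prodMk_left (hg i hi) q₂).aestronglyMeasurable) hq₁

end MixedLpNorm

theorem enorm_sum_abs_rpow_rpow_one_div_rpow {ι : Type*} (s : Finset ι) (a : ι → ℝ) {r : ℝ}
    (hr : 0 < r) : ‖(∑ i ∈ s, |a i| ^ r) ^ (1 / r)‖ₑ ^ r = ∑ i ∈ s, ‖a i‖ₑ ^ r := by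
  have hnonneg : ∀ i ∈ s, 0 ≤ |a i| ^ r := fun i _ ↦ by positivity
  rw [Real.enorm_eq_ofReal (by positivity), ENNReal.ofReal_rpow_of_nonneg (by positivity) hr.le,
    one_div, Real.rpow_inv_rpow (Finset.sum_nonneg hnonneg) hr.ne',
    ENNReal.ofReal_sum_of_nonneg hnonneg]
  simp only [Real.enorm_eq_ofReal_abs, ENNReal.ofReal_rpow_of_nonneg (abs_nonneg _) hr.le]

theorem mixedNorm_min_convex_general
    {Ω₁ Ω₂ : Type*} [MeasurableSpace Ω₁] [MeasurableSpace Ω₂]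
    (μ₁ : Measure Ω₁) (μ₂ : Measure Ω₂) [SigmaFinite μ₂]
    (p₁ p₂ : ℝ) (hp₁ : 0 < p₁) (hp₂ : 0 < p₂) (r : ℝ) (hr : r = min p₁ p₂)
    (n : ℕ) (f : Fin n → Ω₁ × Ω₂ → ℝ) (hf : ∀ k, Measurable (f k)) :
    mixedNorm μ₁ μ₂ p₁ p₂ (fun z => (∑ k, |f k z| ^ r) ^ (1 / r)) ≤
      (∑ k, mixedNorm μ₁ μ₂ p₁ p₂ (f k) ^ r) ^ (1 / r) := by
  have hr₀ : 0 < r := hr ▸ lt_min hp₁ hp₂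
  have hq₁ : 1 ≤ p₁ / r := (one_le_div hr₀).2 (hr ▸ min_le_left p₁ p₂)
  have hq₂ : 1 ≤ p₂ / r := (one_le_div hr₀).2 (hr ▸ min_le_right p₁ p₂)
  have hrescale : ∀ F : Ω₁ × Ω₂ → ℝ,
      mixedNorm μ₁ μ₂ p₁ p₂ F ^ r = mixedLpNorm μ₁ μ₂ (p₁ / r) (p₂ / r) (‖F ·‖ₑ ^ r) := by
    intro F
    rw [mixedLpNorm_enorm_rpow hr₀, div_mul_cancel₀ _ hr₀.ne', div_mul_cancel₀ _ hr₀.ne',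
      mixedNorm_eq_mixedLpNorm hp₂.le]
  have hsum : (fun z ↦ ‖(∑ k, |f k z| ^ r) ^ (1 / r)‖ₑ ^ r) = ∑ k, (‖f k ·‖ₑ ^ r) := by
    ext z
    simp only [Finset.sum_apply, enorm_sum_abs_rpow_rpow_one_div_rpow _ _ hr₀]
  rw [← ENNReal.rpow_le_rpow_iff hr₀, ← ENNReal.rpow_mul, one_div_mul_cancel hr₀.ne',
    ENNReal.rpow_one, hrescale, hsum]
  simp only [hrescale]
  exact mixedLpNorm_sum_le hq₁ hq₂ fun k _ ↦ ((hf k).enorm.pow_const r).stronglyMeasurable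

/-- The mixed-norm space `L_{(p₁,p₂)}(μ₁⊗μ₂)` is `min(p₁,p₂)`-convex with constant `1`:
for `r = min(p₁,p₂)`,
`‖(∑ |f_k|^r)^{1/r}‖_{(p₁,p₂)} ≤ (∑ ‖f_k‖_{(p₁,p₂)}^r)^{1/r}`. -/
theorem mixedNorm_min_convex
    {Ω₁ Ω₂ : Type*} [MeasurableSpace Ω₁] [MeasurableSpace Ω₂]
    (μ₁ : Measure Ω₁) (μ₂ : Measure Ω₂) [SigmaFinite μ₁] [SigmaFinite μ₂]
    (p₁ p₂ : ℝ) (hp₁ : 0 < p₁) (hp₂ : 0 < p₂) (r : ℝ) (hr : r = min p₁ p₂)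
    (n : ℕ) (f : Fin n → Ω₁ × Ω₂ → ℝ) (hf : ∀ k, Measurable (f k)) :
    mixedNorm μ₁ μ₂ p₁ p₂ (fun z => (∑ k, |f k z| ^ r) ^ (1 / r)) ≤
      (∑ k, mixedNorm μ₁ μ₂ p₁ p₂ (f k) ^ r) ^ (1 / r) :=
  mixedNorm_min_convex_general μ₁ μ₂ p₁ p₂ hp₁ hp₂ r hr n f hf
end

section
/- Let (Ω,μ) be a σ-finite measure space, let 1 < r < ∞ with conjugate exponent r', and let 1 ≤ a < ∞. Let u : L^{ar}(μ) × L^{ar'}(μ) → ℝ be a bounded bilinear form that is positive, i.e., u(x,y) ≥ 0 whenever x ≥ 0 a.e. and y ≥ 0 a.e. Then for every n and all x₁,…,xₙ ∈ L^{ar}(μ) and y₁,…,yₙ ∈ L^{ar'}(μ), ∑_{k≤n} |u(x_k,y_k)| ≤ ‖u‖ · ‖(∑_{k≤n} |x_k|^r)^{1/r}‖_{L^{ar}(μ)} · ‖(∑_{k≤n} |y_k|^{r'})^{1/r'}‖_{L^{ar'}(μ)}, where ‖u‖ := sup{|u(x,y)| : ‖x‖_{L^{ar}(μ)} ≤ 1,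 ‖y‖_{L^{ar'}(μ)} ≤ 1}. -/
/-!
If the `x k` and `y k` are simple functions, they are all constant on the level sets `A_v` of one
simple function, so `x k = ∑ᵥ a_{kv} 𝟙_{A_v}`, `y k = ∑_w b_{kw} 𝟙_{A_w}` and
`|u (x k) (y k)| ≤ ∑_{v,w} |a_{kv}| |b_{kw}| u(𝟙_{A_v}, 𝟙_{A_w})` because `u(𝟙_{A_v}, 𝟙_{A_w}) ≥ 0`.
Summing over `k` and applying Hölder's inequality in `ℓ^r` to the coefficients bounds
`∑ₖ |u (x k) (y k)|` by `u(X, Y) ≤ M ‖X‖ ‖Y‖`, where `X = (∑ₖ |x k|^r)^{1/r}` and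
`Y = (∑ₖ |y k|^{r'})^{1/r'}` (on each `A_v` these are the `ℓ^r` and `ℓ^{r'}` norms of the
coefficients). Both sides of the inequality are continuous in the tuples `(x k)`, `(y k)`: the
`L^p` norm of `X` is Lipschitz by Minkowski's inequality. Since simple functions are dense in
`L^p` for `p < ∞`, the inequality holds for all tuples.
-/

open MeasureTheory ENNReal
open scoped NNReal ENNReal

theorem Real.sum_rpow_le_rpow_sum {ι : Type*} (s : Finset ι) {f : ι → ℝ} (hf : ∀ i ∈ s, 0 ≤ f i)
    {p : ℝ} (hp : 1 ≤ p) : ∑ i ∈ s, f i ^ p ≤ (∑ i ∈ s, f i) ^ p := by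
  classical
  induction s using Finset.induction_on with
  | empty => simp [Real.zero_rpow (by linarith : p ≠ 0)]
  | insert a s ha ih =>
    simp only [Finset.forall_mem_insert] at hf
    rw [Finset.sum_insert ha, Finset.sum_insert ha]
    calc f a ^ p + ∑ i ∈ s, f i ^ p ≤ f a ^ p + (∑ i ∈ s, f i) ^ p := by gcongr; exact ih hf.2
      _ ≤ _ := Real.add_rpow_le_rpow_add hf.1 (Finset.sum_nonneg hf.2) hp

theorem Real.Lp_le_L1 {ι : Type*} (s : Finset ι) (f : ι → ℝ) {p : ℝ} (hp : 1 ≤ p) :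
    (∑ i ∈ s, |f i| ^ p) ^ (1 / p) ≤ ∑ i ∈ s, |f i| := by
  have hsum : 0 ≤ ∑ i ∈ s, |f i| := Finset.sum_nonneg fun i _ => abs_nonneg _
  calc (∑ i ∈ s, |f i| ^ p) ^ (1 / p) ≤ ((∑ i ∈ s, |f i|) ^ p) ^ (1 / p) := by
        gcongr
        exact Real.sum_rpow_le_rpow_sum s (fun i _ => abs_nonneg _) hp
    _ = ∑ i ∈ s, |f i| := by
        rw [← Real.rpow_mul hsum, mul_one_div_cancel (by linarith), Real.rpow_one]

theorem LinearMap.apply_sum_smul_sum_smul {J K M N : Type*} [AddCommMonoid M] [Module ℝ M]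
    [AddCommMonoid N] [Module ℝ N] (u : M →ₗ[ℝ] N →ₗ[ℝ] ℝ) (S : Finset J) (T : Finset K)
    (e : J → M) (f : K → N) (c : J → ℝ) (d : K → ℝ) :
    u (∑ j ∈ S, c j • e j) (∑ k ∈ T, d k • f k) = ∑ j ∈ S, ∑ k ∈ T, c j * d k * u (e j) (f k) := by
  simp only [map_sum, map_smul, LinearMap.coe_sum, LinearMap.coe_smul, Finset.sum_apply,
    Pi.smul_apply, smul_eq_mul, Finset.mul_sum]
  rw [Finset.sum_comm]
  exact Finset.sum_congr rfl fun j _ => Finset.sum_congr rfl fun k _ => by ring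

theorem LinearMap.sum_abs_apply_sum_smul_le {ι J K M N : Type*} [AddCommMonoid M] [Module ℝ M]
    [AddCommMonoid N] [Module ℝ N] (u : M →ₗ[ℝ] N →ₗ[ℝ] ℝ) (s : Finset ι) (S : Finset J)
    (T : Finset K) (e : J → M) (f : K → N) (hu : ∀ j k, 0 ≤ u (e j) (f k))
    (c : ι → J → ℝ) (d : ι → K → ℝ) (C : J → ℝ) (D : K → ℝ)
    (hcd : ∀ j k, ∑ i ∈ s, |c i j| * |d i k| ≤ C j * D k) :
    ∑ i ∈ s, |u (∑ j ∈ S, c i j • e j) (∑ k ∈ T, d i k • f k)| ≤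
      u (∑ j ∈ S, C j • e j) (∑ k ∈ T, D k • f k) := by
  simp only [apply_sum_smul_sum_smul]
  calc ∑ i ∈ s, |∑ j ∈ S, ∑ k ∈ T, c i j * d i k * u (e j) (f k)|
      ≤ ∑ i ∈ s, ∑ j ∈ S, ∑ k ∈ T, |c i j| * |d i k| * u (e j) (f k) := by
        gcongr with i
        refine (Finset.abs_sum_le_sum_abs _ _).trans (Finset.sum_le_sum fun j _ => ?_)
        refine (Finset.abs_sum_le_sum_abs _ _).trans_eq (Finset.sum_congr rfl fun k _ => ?_)
        rw [abs_mul, abs_mul, abs_of_nonneg (hu j k)]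
    _ = ∑ j ∈ S, ∑ k ∈ T, (∑ i ∈ s, |c i j| * |d i k|) * u (e j) (f k) := by
        rw [Finset.sum_comm]
        simp only [Finset.sum_mul]
        exact Finset.sum_congr rfl fun j _ => Finset.sum_comm
    _ ≤ ∑ j ∈ S, ∑ k ∈ T, C j * D k * u (e j) (f k) := by
        gcongr with j _ k _
        · exact hu j k
        · exact hcd j k

namespace MeasureTheory.SimpleFunc

variable {Ω V : Type*} [MeasurableSpace Ω] {μ : Measure Ω}

def pi {ι : Type*} [Fintype ι] {β : ι → Type*} (f : ∀ i, SimpleFunc Ω (β i)) :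
    SimpleFunc Ω (∀ i, β i) where
  toFun ω i := f i ω
  measurableSet_fiber' v := by
    convert MeasurableSet.iInter fun i => (f i).measurableSet_fiber (v i)
    ext ω
    simp [funext_iff]
  finite_range' := (Set.Finite.pi fun i => (f i).finite_range).subset <| by
    rintro _ ⟨ω, rfl⟩
    simp

theorem FinMeasSupp.pi {ι : Type*} [Fintype ι] {β : ι → Type*} [∀ i, Zero (β i)]
    {f : ∀ i, SimpleFunc Ω (β i)} (hf : ∀ i, (f i).FinMeasSupp μ) : (pi f).FinMeasSupp μ := by
  simp only [finMeasSupp_iff_support] at hf ⊢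
  have hsub : Function.support (SimpleFunc.pi f) ⊆ ⋃ i, Function.support (f i) := by
    intro ω hω
    by_contra h
    simp only [Set.mem_iUnion, Function.mem_support, not_exists, not_not] at h
    exact hω (funext h)
  exact (measure_mono hsub).trans_lt <| (measure_iUnion_fintype_le μ _).trans_lt <|
    ENNReal.sum_lt_top.2 fun i _ => hf i

/-- Junk value `0` when `μ {G = v} = ∞`, which for `G.FinMeasSupp μ` happens only at `v = 0`. -/
noncomputable def levelSetIndicatorLp (p : ℝ≥0∞) (μ : Measure Ω) (G : SimpleFunc Ω V) (v : V) :
    Lp ℝ p μ :=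
  if h : μ (G ⁻¹' {v}) = ∞ then 0 else indicatorConstLp p (G.measurableSet_fiber v) h 1

variable {p : ℝ≥0∞} {G : SimpleFunc Ω V}

theorem levelSetIndicatorLp_nonneg (v : V) : ∀ᵐ ω ∂μ, 0 ≤ levelSetIndicatorLp p μ G v ω := by
  unfold levelSetIndicatorLp
  split_ifs with h
  · filter_upwards [Lp.coeFn_zero ℝ p μ] with ω hω
    rw [hω]
    rfl
  · filter_upwards [indicatorConstLp_coeFn (p := p) (hs := G.measurableSet_fiber v) (hμs := h)
      (c := (1 : ℝ))] with ω hω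
    rw [hω]
    exact Set.indicator_nonneg (fun _ _ => zero_le_one) ω

theorem coeFn_smul_levelSetIndicatorLp [Zero V] (hG : G.FinMeasSupp μ) {φ : V → ℝ}
    (hφ : φ 0 = 0) (v : V) :
    ⇑(φ v • levelSetIndicatorLp p μ G v) =ᵐ[μ] (G ⁻¹' {v}).indicator fun _ => φ v := by
  by_cases hv : v = 0
  · subst hv
    simp only [hφ, zero_smul, Set.indicator_zero]
    exact Lp.coeFn_zero ℝ p μ
  have hfin : μ (G ⁻¹' {v}) ≠ ∞ := (hG.meas_preimage_singleton_ne_zero hv).ne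
  simp only [levelSetIndicatorLp, hfin, dite_false]
  filter_upwards [Lp.coeFn_smul (φ v) (indicatorConstLp p (G.measurableSet_fiber v) hfin (1 : ℝ)),
    indicatorConstLp_coeFn (p := p) (hs := G.measurableSet_fiber v) (hμs := hfin) (c := (1 : ℝ))]
    with ω h₁ h₂
  rw [h₁, Pi.smul_apply, h₂, smul_eq_mul, ← Set.indicator_const_mul, mul_one]

theorem coeFn_sum_smul_levelSetIndicatorLp [Zero V] (hG : G.FinMeasSupp μ) {φ : V → ℝ}
    (hφ : φ 0 = 0) :
    ⇑(∑ v ∈ G.range, φ v • levelSetIndicatorLp p μ G v) =ᵐ[μ] fun ω => φ (G ω) := by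
  classical
  filter_upwards [Lp.coeFn_fun_finsetSum G.range fun v => φ v • levelSetIndicatorLp p μ G v,
    (Finset.eventually_all G.range).2 fun v _ => coeFn_smul_levelSetIndicatorLp hG hφ v]
    with ω hsum hterm
  rw [hsum, Finset.sum_congr rfl hterm]
  simp [Set.indicator_apply, Finset.sum_ite_eq, G.mem_range_self]

theorem _root_.MeasureTheory.Lp.simpleFunc.coe_eq_sum_smul_levelSetIndicatorLp [Zero V]
    (hG : G.FinMeasSupp μ) (g : Lp.simpleFunc ℝ p μ) {φ : V → ℝ} (hφ : φ 0 = 0)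
    (hg : ∀ ω, Lp.simpleFunc.toSimpleFunc g ω = φ (G ω)) :
    (g : Lp ℝ p μ) = ∑ v ∈ G.range, φ v • levelSetIndicatorLp p μ G v :=
  Lp.ext <| (Lp.simpleFunc.toSimpleFunc_eq_toFun g).symm.trans <|
    (Filter.EventuallyEq.of_eq (funext hg)).trans (coeFn_sum_smul_levelSetIndicatorLp hG hφ).symm

end MeasureTheory.SimpleFunc

section

variable {Ω ι : Type*} [MeasurableSpace Ω] {μ : Measure Ω} [Fintype ι] {p q : ℝ≥0∞} {r r' : ℝ}

theorem eLpNorm_Lr_le_add (hp : 1 ≤ p) (hr : 1 ≤ r) (x x' : ι → Lp ℝ p μ) :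
    eLpNorm (fun ω => (∑ k, |x k ω| ^ r) ^ (1 / r)) p μ ≤
      eLpNorm (fun ω => (∑ k, |x' k ω| ^ r) ^ (1 / r)) p μ + ∑ k, ‖x k - x' k‖ₑ := by
  have hr' : 0 ≤ 1 / r := one_div_nonneg.2 (zero_le_one.trans hr)
  have hdiff : ∀ k, AEStronglyMeasurable (fun ω => |x k ω - x' k ω|) μ := fun k =>
    ((Lp.aestronglyMeasurable (x k)).sub (Lp.aestronglyMeasurable (x' k))).norm
  have hpt : ∀ ω, (∑ k, |x k ω| ^ r) ^ (1 / r) ≤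
      (∑ k, |x' k ω| ^ r) ^ (1 / r) + ∑ k, |x k ω - x' k ω| := fun ω => by
    have := Real.Lp_add_le Finset.univ (fun k => x' k ω) (fun k => x k ω - x' k ω) hr
    simp only [add_sub_cancel] at this
    exact this.trans (by gcongr; exact Real.Lp_le_L1 _ _ hr)
  calc eLpNorm (fun ω => (∑ k, |x k ω| ^ r) ^ (1 / r)) p μ
      ≤ eLpNorm ((fun ω => (∑ k, |x' k ω| ^ r) ^ (1 / r)) + ∑ k, fun ω => |x k ω - x' k ω|)
          p μ := by
        refine eLpNorm_mono_real fun ω => ?_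
        rw [Real.norm_of_nonneg (by positivity)]
        simpa using hpt ω
    _ ≤ eLpNorm (fun ω => (∑ k, |x' k ω| ^ r) ^ (1 / r)) p μ +
          ∑ k, eLpNorm (fun ω => |x k ω - x' k ω|) p μ := by
        refine (eLpNorm_add_le (by fun_prop (disch := first | exact hr' | linarith)) ?_ hp).trans ?_
        · exact Finset.aestronglyMeasurable_sum _ fun k _ => hdiff k
        · gcongr
          exact eLpNorm_sum_le (fun k _ => hdiff k) hp
    _ = _ := by
        congr 1
        refine Finset.sum_congr rfl fun k _ => ?_
        rw [Lp.enorm_def, ← eLpNorm_norm ⇑(x k - x' k)]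
        refine eLpNorm_congr_ae ?_
        filter_upwards [Lp.coeFn_sub (x k) (x' k)] with ω hω
        rw [hω, Pi.sub_apply, Real.norm_eq_abs]

theorem eLpNorm_Lr_lt_top (hp : 1 ≤ p) (hr : 1 ≤ r) (x : ι → Lp ℝ p μ) :
    eLpNorm (fun ω => (∑ k, |x k ω| ^ r) ^ (1 / r)) p μ < ∞ := by
  have hzero : eLpNorm (fun ω => (∑ k, |(0 : ι → Lp ℝ p μ) k ω| ^ r) ^ (1 / r)) p μ = 0 := by
    refine (eLpNorm_congr_ae ?_).trans (eLpNorm_zero (ε := ℝ))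
    filter_upwards [Lp.coeFn_zero ℝ p μ] with ω hω
    simp only [Pi.zero_apply, hω]
    simp [(zero_lt_one.trans_le hr).ne']
  refine (eLpNorm_Lr_le_add hp hr x 0).trans_lt ?_
  rw [hzero, zero_add]
  exact ENNReal.sum_lt_top.2 fun k _ => enorm_lt_top

theorem continuous_toReal_eLpNorm_Lr [Fact (1 ≤ p)] (hr : 1 ≤ r) :
    Continuous fun x : ι → Lp ℝ p μ =>
      (eLpNorm (fun ω => (∑ k, |x k ω| ^ r) ^ (1 / r)) p μ).toReal := by
  refine ENNReal.continuousOn_toReal.comp_continuous ?_ fun x =>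
    (eLpNorm_Lr_lt_top Fact.out hr x).ne
  refine continuous_of_le_add_edist (Fintype.card ι) (natCast_ne_top _) fun x x' =>
    (eLpNorm_Lr_le_add Fact.out hr x x').trans ?_
  gcongr
  calc ∑ k, ‖x k - x' k‖ₑ = ∑ k, edist (x k) (x' k) := by simp only [edist_eq_enorm_sub]
    _ ≤ ∑ _k : ι, edist x x' := Finset.sum_le_sum fun k _ => edist_le_pi_edist x x' k
    _ = _ := by simp

theorem MeasureTheory.Lp.simpleFunc.coeFn_sum_smul_levelSetIndicatorLp_eq_Lr {V : Type*} [Zero V]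
    {G : SimpleFunc Ω V} (hG : G.FinMeasSupp μ) (hr : r ≠ 0) (x : ι → Lp.simpleFunc ℝ p μ)
    {φ : ι → V → ℝ} (hφ : ∀ k, φ k 0 = 0) (hx : ∀ k ω, toSimpleFunc (x k) ω = φ k (G ω)) :
    ⇑(∑ v ∈ G.range, (∑ k, |φ k v| ^ r) ^ (1 / r) • SimpleFunc.levelSetIndicatorLp p μ G v)
      =ᵐ[μ] fun ω => (∑ k, |(x k : Lp ℝ p μ) ω| ^ r) ^ (1 / r) := by
  filter_upwards [SimpleFunc.coeFn_sum_smul_levelSetIndicatorLp (p := p) hG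
      (φ := fun v => (∑ k, |φ k v| ^ r) ^ (1 / r)) (by simp [hφ, hr]),
    ae_all_iff.2 fun k => toSimpleFunc_eq_toFun (x k)] with ω hω hxω
  simp only [hω, ← hxω, hx]

theorem sum_abs_apply_le_of_simpleFunc (hp₀ : p ≠ 0) (hp : p ≠ ∞) (hq₀ : q ≠ 0) (hq : q ≠ ∞)
    (u : Lp ℝ p μ →ₗ[ℝ] Lp ℝ q μ →ₗ[ℝ] ℝ) {M : ℝ} (hM : ∀ x y, |u x y| ≤ M * ‖x‖ * ‖y‖)
    (hpos : ∀ x y, (∀ᵐ ω ∂μ, 0 ≤ x ω) → (∀ᵐ ω ∂μ, 0 ≤ y ω) → 0 ≤ u x y)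
    (hrr : r.HolderConjugate r') (x : ι → Lp.simpleFunc ℝ p μ) (y : ι → Lp.simpleFunc ℝ q μ) :
    ∑ k, |u (x k) (y k)| ≤
      M * (eLpNorm (fun ω => (∑ k, |(x k : Lp ℝ p μ) ω| ^ r) ^ (1 / r)) p μ).toReal *
        (eLpNorm (fun ω => (∑ k, |(y k : Lp ℝ q μ) ω| ^ r') ^ (1 / r')) q μ).toReal := by
  let G : SimpleFunc Ω (ι → ℝ × ℝ) := SimpleFunc.pi fun k =>
    (Lp.simpleFunc.toSimpleFunc (x k)).pair (Lp.simpleFunc.toSimpleFunc (y k))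
  have hG : G.FinMeasSupp μ := SimpleFunc.FinMeasSupp.pi fun k =>
    ((SimpleFunc.memLp_iff_finMeasSupp hp₀ hp).1 (Lp.simpleFunc.memLp (x k))).pair
      ((SimpleFunc.memLp_iff_finMeasSupp hq₀ hq).1 (Lp.simpleFunc.memLp (y k)))
  set e := SimpleFunc.levelSetIndicatorLp p μ G
  set f := SimpleFunc.levelSetIndicatorLp q μ G
  set X := ∑ v ∈ G.range, (∑ k, |(v k).1| ^ r) ^ (1 / r) • e v
  set Y := ∑ v ∈ G.range, (∑ k, |(v k).2| ^ r') ^ (1 / r') • f v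
  calc ∑ k, |u (x k) (y k)|
      = ∑ k, |u (∑ v ∈ G.range, (v k).1 • e v) (∑ w ∈ G.range, (w k).2 • f w)| := by
        refine Finset.sum_congr rfl fun k _ => ?_
        rw [Lp.simpleFunc.coe_eq_sum_smul_levelSetIndicatorLp hG (x k) (φ := fun v => (v k).1) rfl
            fun _ => rfl,
          Lp.simpleFunc.coe_eq_sum_smul_levelSetIndicatorLp hG (y k) (φ := fun v => (v k).2) rfl
            fun _ => rfl]
    _ ≤ u X Y := by
        refine u.sum_abs_apply_sum_smul_le _ _ _ e f (fun v w => hpos _ _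
          (SimpleFunc.levelSetIndicatorLp_nonneg v) (SimpleFunc.levelSetIndicatorLp_nonneg w))
          _ _ _ _ fun v w => ?_
        simpa only [abs_abs] using
          Real.inner_le_Lp_mul_Lq Finset.univ (fun k => |(v k).1|) (fun k => |(w k).2|) hrr
    _ ≤ M * ‖X‖ * ‖Y‖ := (le_abs_self _).trans (hM X Y)
    _ = _ := by
        rw [Lp.norm_def, Lp.norm_def,
          eLpNorm_congr_ae (Lp.simpleFunc.coeFn_sum_smul_levelSetIndicatorLp_eq_Lr hG
            hrr.ne_zero x (φ := fun k v => (v k).1) (fun _ => rfl) fun _ _ => rfl),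
          eLpNorm_congr_ae (Lp.simpleFunc.coeFn_sum_smul_levelSetIndicatorLp_eq_Lr hG
            hrr.symm.ne_zero y (φ := fun k v => (v k).2) (fun _ => rfl) fun _ _ => rfl)]

theorem sum_abs_apply_le [Fact (1 ≤ p)] [Fact (1 ≤ q)] (hp : p ≠ ∞) (hq : q ≠ ∞)
    (u : Lp ℝ p μ →ₗ[ℝ] Lp ℝ q μ →ₗ[ℝ] ℝ) {M : ℝ} (hM : ∀ x y, |u x y| ≤ M * ‖x‖ * ‖y‖)
    (hpos : ∀ x y, (∀ᵐ ω ∂μ, 0 ≤ x ω) → (∀ᵐ ω ∂μ, 0 ≤ y ω) → 0 ≤ u x y)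
    (hrr : r.HolderConjugate r') (x : ι → Lp ℝ p μ) (y : ι → Lp ℝ q μ) :
    ∑ k, |u (x k) (y k)| ≤
      M * (eLpNorm (fun ω => (∑ k, |x k ω| ^ r) ^ (1 / r)) p μ).toReal *
        (eLpNorm (fun ω => (∑ k, |y k ω| ^ r') ^ (1 / r')) q μ).toReal := by
  let uc := u.mkContinuous₂ M fun x y => by simpa only [Real.norm_eq_abs] using hM x y
  have hdense : DenseRange (Prod.map
      (Pi.map fun (_ : ι) (f : Lp.simpleFunc ℝ p μ) => (f : Lp ℝ p μ))
      (Pi.map fun (_ : ι) (g : Lp.simpleFunc ℝ q μ) => (g : Lp ℝ q μ))) :=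
    (DenseRange.piMap fun _ => Lp.simpleFunc.denseRange hp).prodMap
      (DenseRange.piMap fun _ => Lp.simpleFunc.denseRange hq)
  refine hdense.induction_on (p := fun xy => ∑ k, |u (xy.1 k) (xy.2 k)| ≤
      M * (eLpNorm (fun ω => (∑ k, |xy.1 k ω| ^ r) ^ (1 / r)) p μ).toReal *
        (eLpNorm (fun ω => (∑ k, |xy.2 k ω| ^ r') ^ (1 / r')) q μ).toReal) (x, y)
    (isClosed_le ?_ ?_) fun st => ?_
  · exact continuous_finsetSum _ fun k _ => (show Continuous fun xy :
      (ι → Lp ℝ p μ) × (ι → Lp ℝ q μ) => uc (xy.1 k) (xy.2 k) by fun_prop).abs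
  · exact (continuous_const.mul ((continuous_toReal_eLpNorm_Lr hrr.lt.le).comp
      continuous_fst)).mul ((continuous_toReal_eLpNorm_Lr hrr.symm.lt.le).comp continuous_snd)
  · exact sum_abs_apply_le_of_simpleFunc (zero_lt_one.trans_le Fact.out).ne' hp
      (zero_lt_one.trans_le Fact.out).ne' hq u hM hpos hrr st.1 st.2

end

theorem ENNReal.ofReal_mul_toReal_mul_toReal_le (M : ℝ) (a b : ℝ≥0∞) :
    ENNReal.ofReal (M * a.toReal * b.toReal) ≤ ENNReal.ofReal M * a * b := by
  rw [ENNReal.ofReal_mul' toReal_nonneg, ENNReal.ofReal_mul' toReal_nonneg]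
  gcongr <;> exact ofReal_toReal_le

theorem positive_bilinear_vector_valued_general
    {Ω : Type*} [MeasurableSpace Ω] (μ : Measure Ω)
    (r r' a : ℝ) (hr : 1 < r) (hrr' : 1 / r + 1 / r' = 1) (ha : 1 ≤ a)
    (u : Lp ℝ (ENNReal.ofReal (a * r)) μ →ₗ[ℝ] Lp ℝ (ENNReal.ofReal (a * r')) μ →ₗ[ℝ] ℝ)
    (M : ℝ) (hM : ∀ x y, |u x y| ≤ M * ‖x‖ * ‖y‖)
    (hpos : ∀ x y, (∀ᵐ ω ∂μ, 0 ≤ x ω) → (∀ᵐ ω ∂μ, 0 ≤ y ω) → 0 ≤ u x y) :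
    ∀ (n : ℕ) (x : Fin n → Lp ℝ (ENNReal.ofReal (a * r)) μ)
      (y : Fin n → Lp ℝ (ENNReal.ofReal (a * r')) μ),
      ENNReal.ofReal (∑ k, |u (x k) (y k)|) ≤
        ENNReal.ofReal M *
          eLpNorm (fun ω => (∑ k, |x k ω| ^ r) ^ (1 / r)) (ENNReal.ofReal (a * r)) μ *
          eLpNorm (fun ω => (∑ k, |y k ω| ^ r') ^ (1 / r')) (ENNReal.ofReal (a * r')) μ := by
  intro n x y
  have hrr : r.HolderConjugate r' :=
    Real.holderConjugate_iff.2 ⟨hr, by simpa only [one_div] using hrr'⟩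
  have : Fact (1 ≤ ENNReal.ofReal (a * r)) := ⟨ENNReal.one_le_ofReal.2 (by nlinarith)⟩
  have : Fact (1 ≤ ENNReal.ofReal (a * r')) :=
    ⟨ENNReal.one_le_ofReal.2 (by nlinarith [hrr.symm.lt])⟩
  exact (ENNReal.ofReal_le_ofReal
    (sum_abs_apply_le ofReal_ne_top ofReal_ne_top u hM hpos hrr x y)).trans
      (ENNReal.ofReal_mul_toReal_mul_toReal_le _ _ _)

/-- Every positive bounded bilinear form `u : L^{ar}(μ) × L^{ar'}(μ) → ℝ`
(`1 < r < ∞`, `1/r + 1/r' = 1`, `1 ≤ a < ∞`) with `|u(x,y)| ≤ M ‖x‖ ‖y‖`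
satisfies the vector-valued inequality (2.3):
`∑ |u(x_k,y_k)| ≤ M ‖(∑ |x_k|^r)^{1/r}‖_{L^{ar}} ‖(∑ |y_k|^{r'})^{1/r'}‖_{L^{ar'}}`. -/
theorem positive_bilinear_vector_valued
    {Ω : Type*} [MeasurableSpace Ω] (μ : Measure Ω) [SigmaFinite μ]
    (r r' a : ℝ) (hr : 1 < r) (hrr' : 1 / r + 1 / r' = 1) (ha : 1 ≤ a)
    (u : Lp ℝ (ENNReal.ofReal (a * r)) μ →ₗ[ℝ] Lp ℝ (ENNReal.ofReal (a * r')) μ →ₗ[ℝ] ℝ)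
    (M : ℝ) (hM : ∀ x y, |u x y| ≤ M * ‖x‖ * ‖y‖)
    (hpos : ∀ x y, (∀ᵐ ω ∂μ, 0 ≤ x ω) → (∀ᵐ ω ∂μ, 0 ≤ y ω) → 0 ≤ u x y) :
    ∀ (n : ℕ) (x : Fin n → Lp ℝ (ENNReal.ofReal (a * r)) μ)
      (y : Fin n → Lp ℝ (ENNReal.ofReal (a * r')) μ),
      ENNReal.ofReal (∑ k, |u (x k) (y k)|) ≤
        ENNReal.ofReal M *
          eLpNorm (fun ω => (∑ k, |x k ω| ^ r) ^ (1 / r)) (ENNReal.ofReal (a * r)) μ *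
          eLpNorm (fun ω => (∑ k, |y k ω| ^ r') ^ (1 / r')) (ENNReal.ofReal (a * r')) μ :=
  positive_bilinear_vector_valued_general μ r r' a hr hrr' ha u M hM hpos
end
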